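/- Let ε, δ ∈ (0, 1/2), A, N > 0 with N²/(δA) > e^{1.5}. If nonnegative reals x_1,…,x_N and reals a_1,…,a_N ≥ 1 satisfy ∑ a_n ≤ A and ∑ ε^{a_n x_n} < δ, then ∑ x_n ≥ (N²/(A·ln(1/ε)))·ln(N/δ). -/

import Mathlib

/-!
With `L = log (1/ε)` and `S = ∑ 1/aₙ`, the tangent-line bound `log b + 1 - b e^{-z} ≤ z`, taken at
`b = aₙ S / δ`, `z = L aₙ xₙ` and summed over `n`, turns the budget `∑ ε^{aₙ xₙ} < δ` into
`L ∑ xₙ ≥ ∑ (log (S/δ) + log aₙ) / aₙ`. Cauchy–Schwarz gives `S ≥ N²/A`, so the right-hand side is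
at least `∑ g(aₙ)` for `g(u) = (K + log u)/u` with `K = log (N²/(δA)) ≥ 3/2`. On `[1, ∞)` this `g`
is convex and decreasing, so Jensen's inequality and `∑ aₙ ≤ A` give
`∑ g(aₙ) ≥ N g(A/N) = (N²/A) log (N/δ)`.
-/

open Real Set Finset

lemma sq_card_le_sum_mul_sum_inv {ι : Type*} {s : Finset ι} {f : ι → ℝ}
    (hf : ∀ i ∈ s, 0 < f i) : (#s : ℝ) ^ 2 ≤ (∑ i ∈ s, f i) * ∑ i ∈ s, (f i)⁻¹ := by
  have h := ((antivaryOn_inv_right₀ hf).2 (monovaryOn_self f s)).card_mul_sum_le_sum_mul_sum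
  simp only [Pi.inv_apply] at h
  rwa [sum_congr rfl fun i hi => mul_inv_cancel₀ (hf i hi).ne', sum_const, nsmul_one, ← sq] at h

lemma sq_card_div_le_sum_inv {ι : Type*} {s : Finset ι} {f : ι → ℝ} {A : ℝ}
    (hf : ∀ i ∈ s, 0 < f i) (hA : 0 < A) (hsum : ∑ i ∈ s, f i ≤ A) :
    (#s : ℝ) ^ 2 / A ≤ ∑ i ∈ s, (f i)⁻¹ := by
  rw [div_le_iff₀ hA, mul_comm]
  exact (sq_card_le_sum_mul_sum_inv hf).trans
    (mul_le_mul_of_nonneg_right hsum (sum_nonneg fun i hi => (inv_pos.2 (hf i hi)).le))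

lemma log_add_one_sub_mul_exp_neg_le {b : ℝ} (hb : 0 < b) (z : ℝ) :
    log b + 1 - b * exp (-z) ≤ z := by
  have h := add_one_le_exp (log b - z)
  rw [exp_sub, exp_log hb, div_eq_mul_inv, ← exp_neg] at h
  linarith

theorem sum_add_log_div_le_of_sum_exp_le {ι : Type*} [Fintype ι] {a y : ι → ℝ} {δ : ℝ}
    (ha : ∀ i, 0 < a i) (hδ : 0 < δ) (h : ∑ i, exp (-(a i * y i)) ≤ δ) :
    ∑ i, (log ((∑ j, (a j)⁻¹) / δ) + log (a i)) / a i ≤ ∑ i, y i := by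
  set S := ∑ j, (a j)⁻¹
  have hS : ∀ i, 0 < S / δ := fun i =>
    div_pos ((inv_pos.2 (ha i)).trans_le (single_le_sum (fun j _ => (inv_pos.2 (ha j)).le)
      (mem_univ i))) hδ
  have hterm : ∀ i, (log (S / δ) + log (a i)) / a i + (a i)⁻¹ - S / δ * exp (-(a i * y i))
      ≤ y i := fun i => by
    have h := log_add_one_sub_mul_exp_neg_le (mul_pos (hS i) (ha i)) (a i * y i)
    rw [log_mul (hS i).ne' (ha i).ne'] at h
    have ha' := (ha i).ne'
    calc _ = (log (S / δ) + log (a i) + 1 - S / δ * a i * exp (-(a i * y i))) / a i := by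
          field_simp
      _ ≤ a i * y i / a i := by gcongr; exact (ha i).le
      _ = y i := by field_simp
  have hexp : S / δ * ∑ i, exp (-(a i * y i)) ≤ S := by
    have hS0 : 0 ≤ S / δ := div_nonneg (sum_nonneg fun j _ => (inv_pos.2 (ha j)).le) hδ.le
    calc _ ≤ S / δ * δ := mul_le_mul_of_nonneg_left h hS0
      _ = S := div_mul_cancel₀ S hδ.ne'
  have := sum_le_sum fun i (_ : i ∈ Finset.univ) => hterm i
  rw [sum_sub_distrib, sum_add_distrib, ← mul_sum] at this
  linarith

theorem ConvexOn.card_mul_map_div_card_le_sum {ι : Type*} {s : Finset ι} {D : Set ℝ}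
    {f : ℝ → ℝ} {a : ι → ℝ} {A : ℝ} (hf : ConvexOn ℝ D f) (hf' : AntitoneOn f D)
    (ha : ∀ i ∈ s, a i ∈ D) (hsum : ∑ i ∈ s, a i ≤ A) (hA : A / #s ∈ D) :
    #s * f (A / #s) ≤ ∑ i ∈ s, f (a i) := by
  rcases s.eq_empty_or_nonempty with rfl | hs
  · simp
  have hcard : (0 : ℝ) < #s := by exact_mod_cast hs.card_pos
  have hw : ∑ _i ∈ s, (#s : ℝ)⁻¹ = 1 := by simp [hcard.ne']
  have hmean : ∑ i ∈ s, (#s : ℝ)⁻¹ • a i ∈ D :=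
    hf.1.sum_mem (fun _ _ => inv_nonneg.2 hcard.le) hw ha
  calc #s * f (A / #s) ≤ #s * f (∑ i ∈ s, (#s : ℝ)⁻¹ • a i) := by
        refine mul_le_mul_of_nonneg_left (hf' hmean hA ?_) hcard.le
        simp only [smul_eq_mul]
        rw [← mul_sum, inv_mul_eq_div]
        exact div_le_div_of_nonneg_right hsum hcard.le
    _ ≤ #s * ∑ i ∈ s, (#s : ℝ)⁻¹ • f (a i) :=
        mul_le_mul_of_nonneg_left (hf.map_sum_le (fun _ _ => inv_nonneg.2 hcard.le) hw ha)
          hcard.le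
    _ = ∑ i ∈ s, f (a i) := by
        simp only [smul_eq_mul, ← mul_sum, mul_inv_cancel_left₀ hcard.ne']

section AddLogDiv

variable (K : ℝ) {t : ℝ}

lemma hasDerivAt_add_log_div (ht : 0 < t) :
    HasDerivAt (fun u => (K + log u) / u) ((1 - K - log t) / t ^ 2) t := by
  refine (((hasDerivAt_log ht.ne').const_add K).div (hasDerivAt_id t) ht.ne').congr_deriv ?_
  simp only [id]
  field_simp
  ring

lemma hasDerivAt_one_sub_sub_log_div_sq (ht : 0 < t) :
    HasDerivAt (fun u => (1 - K - log u) / u ^ 2) ((2 * K + 2 * log t - 3) / t ^ 3) t := by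
  refine (((hasDerivAt_log ht.ne').const_sub (1 - K)).div (hasDerivAt_pow 2 t)
    (pow_ne_zero 2 ht.ne')).congr_deriv ?_
  field_simp
  ring

variable {K}

lemma antitoneOn_add_log_div (hK : 1 ≤ K) : AntitoneOn (fun u => (K + log u) / u) (Ici 1) := by
  refine antitoneOn_of_hasDerivWithinAt_nonpos (convex_Ici 1)
    (f' := fun u => (1 - K - log u) / u ^ 2)
    (fun u hu => (hasDerivAt_add_log_div K (one_pos.trans_le hu)).continuousAt.continuousWithinAt)
    (fun u hu => ?_) fun u hu => ?_ <;> rw [interior_Ici] at hu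
  · exact (hasDerivAt_add_log_div K (one_pos.trans hu)).hasDerivWithinAt
  · have := log_nonneg hu.le
    exact div_nonpos_of_nonpos_of_nonneg (by linarith) (sq_nonneg u)

lemma convexOn_add_log_div (hK : 3 / 2 ≤ K) : ConvexOn ℝ (Ici 1) (fun u => (K + log u) / u) := by
  refine convexOn_of_hasDerivWithinAt2_nonneg (convex_Ici 1)
    (f' := fun u => (1 - K - log u) / u ^ 2) (f'' := fun u => (2 * K + 2 * log u - 3) / u ^ 3)
    (fun u hu => (hasDerivAt_add_log_div K (one_pos.trans_le hu)).continuousAt.continuousWithinAt)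
    (fun u hu => ?_) (fun u hu => ?_) fun u hu => ?_ <;> rw [interior_Ici] at hu
  · exact (hasDerivAt_add_log_div K (one_pos.trans hu)).hasDerivWithinAt
  · exact (hasDerivAt_one_sub_sub_log_div_sq K (one_pos.trans hu)).hasDerivWithinAt
  · have := log_nonneg hu.le
    exact div_nonneg (by linarith) (pow_nonneg (zero_le_one.trans hu.le) 3)

lemma sq_card_div_mul_add_log_le_sum_add_log_div {ι : Type*} {s : Finset ι} {a : ι → ℝ}
    {A : ℝ} (hK : 3 / 2 ≤ K) (hs : s.Nonempty) (ha : ∀ i ∈ s, 1 ≤ a i)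
    (hsum : ∑ i ∈ s, a i ≤ A) :
    (#s : ℝ) ^ 2 / A * (K + log (A / #s)) ≤ ∑ i ∈ s, (K + log (a i)) / a i := by
  have hcard : (0 : ℝ) < #s := by exact_mod_cast hs.card_pos
  have hcardA : (#s : ℝ) ≤ A := le_trans (by simpa using card_nsmul_le_sum s a 1 ha) hsum
  have hA : 0 < A := hcard.trans_le hcardA
  calc (#s : ℝ) ^ 2 / A * (K + log (A / #s)) = #s * ((K + log (A / #s)) / (A / #s)) := by
        field_simp
    _ ≤ _ := (convexOn_add_log_div hK).card_mul_map_div_card_le_sum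
        (antitoneOn_add_log_div (by linarith)) ha hsum ((one_le_div hcard).2 hcardA)

end AddLogDiv

lemma sq_card_div_mul_log_card_div_le_sum {ι : Type*} {s : Finset ι} {a : ι → ℝ} {δ A : ℝ}
    (hs : s.Nonempty) (hδ : 0 < δ) (ha : ∀ i ∈ s, 1 ≤ a i) (hsum : ∑ i ∈ s, a i ≤ A)
    (hbig : exp (3 / 2) ≤ (#s : ℝ) ^ 2 / (δ * A)) :
    (#s : ℝ) ^ 2 / A * log (#s / δ) ≤
      ∑ i ∈ s, (log ((∑ j ∈ s, (a j)⁻¹) / δ) + log (a i)) / a i := by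
  set K := log ((#s : ℝ) ^ 2 / (δ * A))
  have hcard : (0 : ℝ) < #s := by exact_mod_cast hs.card_pos
  have ha0 : ∀ i ∈ s, 0 < a i := fun i hi => one_pos.trans_le (ha i hi)
  have hA : 0 < A := hcard.trans_le (le_trans (by simpa using card_nsmul_le_sum s a 1 ha) hsum)
  have hK : 3 / 2 ≤ K := (le_log_iff_exp_le (by positivity)).2 hbig
  have hKS : K ≤ log ((∑ j ∈ s, (a j)⁻¹) / δ) := by
    refine log_le_log (by positivity) ?_
    rw [mul_comm δ, ← div_div]
    gcongr
    exact sq_card_div_le_sum_inv ha0 hA hsum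
  have hlog : K + log (A / #s) = log (#s / δ) := by
    rw [← log_mul (by positivity) (by positivity)]
    congr 1
    field_simp
  calc _ = (#s : ℝ) ^ 2 / A * (K + log (A / #s)) := by rw [hlog]
    _ ≤ ∑ i ∈ s, (K + log (a i)) / a i :=
        sq_card_div_mul_add_log_le_sum_add_log_div hK hs ha hsum
    _ ≤ _ := by
        gcongr with i hi
        exact (ha0 i hi).le

theorem core_optimization_lower_bound_general (N : ℕ) (hN : 0 < N) (ε δ A : ℝ)
    (hε0 : 0 < ε) (hε1 : ε < 1 / 2) (hδ0 : 0 < δ)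
    (hBig : (N : ℝ) ^ 2 / (δ * A) > Real.exp 1.5)
    (x a : Fin N → ℝ) (ha : ∀ n, 1 ≤ a n)
    (hsuma : ∑ n, a n ≤ A)
    (hconstraint : ∑ n, ε ^ (a n * x n) < δ) :
    ∑ n, x n ≥ ((N : ℝ) ^ 2 / (A * Real.log (1 / ε))) * Real.log (N / δ) := by
  set L := log (1 / ε)
  have hL : 0 < L := log_pos ((one_lt_div hε0).2 (by linarith))
  have hlower := sq_card_div_mul_log_card_div_le_sum ⟨⟨0, hN⟩, mem_univ _⟩ hδ0
    (fun n _ => ha n) hsuma (by norm_num at hBig ⊢; simpa using hBig.le)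
  have hbudget : ∑ n, (log ((∑ j, (a j)⁻¹) / δ) + log (a n)) / a n ≤ ∑ n, L * x n := by
    refine sum_add_log_div_le_of_sum_exp_le (fun n => one_pos.trans_le (ha n)) hδ0
      (le_of_eq_of_le (sum_congr rfl fun n _ => ?_) hconstraint.le)
    rw [rpow_def_of_pos hε0]
    simp only [L, one_div, log_inv]
    ring_nf
  rw [card_univ, Fintype.card_fin] at hlower
  rw [← mul_sum] at hbudget
  rw [ge_iff_le]
  calc _ = (N : ℝ) ^ 2 / A * log (N / δ) / L := by ring
    _ ≤ (L * ∑ n, x n) / L := div_le_div_of_nonneg_right (hlower.trans hbudget) hL.le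
    _ = ∑ n, x n := by field_simp

theorem core_optimization_lower_bound (N : ℕ) (hN : 0 < N) (ε δ A : ℝ)
    (hε0 : 0 < ε) (hε1 : ε < 1 / 2) (hδ0 : 0 < δ) (hδ1 : δ < 1 / 2) (hA : 0 < A)
    (hBig : (N : ℝ) ^ 2 / (δ * A) > Real.exp 1.5)
    (x a : Fin N → ℝ) (hx : ∀ n, 0 ≤ x n) (ha : ∀ n, 1 ≤ a n)
    (hsuma : ∑ n, a n ≤ A)
    (hconstraint : ∑ n, ε ^ (a n * x n) < δ) :
    ∑ n, x n ≥ ((N : ℝ) ^ 2 / (A * Real.log (1 / ε))) * Real.log (N / δ) :=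
  core_optimization_lower_bound_general N hN ε δ A hε0 hε1 hδ0 hBig x a ha hsuma hconstraint
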